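/- arXiv:2401.17576 — 2 statements merged into one kernel-verified Lean document; each statement's English description precedes it below -/
import Mathlib

section
/- Let α ∈ (1,2), and let f, u, v, k₁, k₂, c₁, c₂, c₃ ≥ 0 and a ≥ 0 be real numbers, with k₁, k₂ > 0. Let g : ℝ × ℝ → ℝ be a continuous function satisfying for all (y,z) ∈ ℝ × ℝ: (A1) |g(y,z)| ≤ f + u|y| + v|z|^α; (A2)(i) sgn(y₁ − y₂)(g(y₁,z) − g(y₂,z)) ≤ k₁|y₁ − y₂| for all y₁, y₂ ≤ 0 and all z; (A2)(ii) |g(y₁,z) − g(y₂,z)| ≤ k₂|y₁ − y₂| for all y₁, y₂ ≥ 0 and all z; (A3)(i) |g(y,z₁) − g(y,z₂)| ≤ c₁|z₁ − z₂| for all z₁, z₂ ∈ [−a,a] and all y; (A3)(ii) for each y, z ↦ g(y,z) is convex on (−∞,−a] and convex on [a,∞); (A4) g(y,z) − g(y,a) ≥ −c₂(z−a) for all z ≥ a and all y, and g(y,z) − g(y,−a) ≥ c₃(z+a) for all z ≤ −a and all y. Set c := max(c₁, c₂, c₃). Then for all (y₁,z₁), (y₂,z₂) ∈ ℝ² and θ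 ∈ (0,1) with y₁ > θy₂: g(y₁,z₁) − θg(y₂,z₂) ≤ (1−θ)·[ (23f + 38va^α + 2c + 11ca) + (23u + k₁ + k₂)|y₂| + (23u + k₁ + k₂)|δ_θy| + (4v + 2c)|δ_θz|^α ], where δ_θy := (y₁ − θy₂)/(1−θ) and δ_θz := (z₁ − θz₂)/(1−θ). -/
/-!
Split `g(y₁,z₁) - θ g(y₂,z₂)` as `[g(y₁,z₁) - θ g(y₁,z₂)] + θ [g(y₁,z₂) - g(y₂,z₂)]`.

The second term is handled by (A2): `θ y₂ < y₁` forces either `y₂ ≤ y₁`, where (A2)(i) and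
(A2)(ii) combine through `0` into a one-sided bound with constant `k₁ + k₂`, or `0 ≤ y₂, y₁`;
and `|y₁ - y₂| ≤ (1 - θ) (|y₂| + |δ_θy|)`.

For the first term put `h = g(y₁, ·)`, so that `z₁ = θ z₂ + (1 - θ) δ_θz`. By (A3)(i) and (A4),
`h p - h z ≤ c |p - z|` whenever `p ∈ [-a, a]`. This settles the case `z₁ ∈ [-a, a]`; otherwise
`z₁` lies on a half-line where `h` is convex, and is a convex combination of `±a` and of `z₂` or
`δ_θz`; what remains is the growth bound (A1) on `[-a, a]` and at `δ_θz`.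
-/

open Set

section OneSidedLipschitz

variable {φ : ℝ → ℝ} {k₁ k₂ y₁ y₂ : ℝ}

lemma sub_le_of_le_of_nonpos
    (hneg : ∀ y₁ y₂, y₁ ≤ 0 → y₂ ≤ 0 →
      (if 0 < y₁ - y₂ then (1 : ℝ) else -1) * (φ y₁ - φ y₂) ≤ k₁ * |y₁ - y₂|)
    (hy : y₂ ≤ y₁) (hy₁ : y₁ ≤ 0) : φ y₁ - φ y₂ ≤ k₁ * (y₁ - y₂) := by
  rcases hy.eq_or_lt with rfl | hlt
  · simp
  · simpa [sub_pos.2 hlt, abs_of_pos (sub_pos.2 hlt)] using hneg y₁ y₂ hy₁ (hlt.le.trans hy₁)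

lemma sub_le_add_mul_of_le (hk₁ : 0 ≤ k₁) (hk₂ : 0 ≤ k₂)
    (hneg : ∀ y₁ y₂, y₁ ≤ 0 → y₂ ≤ 0 →
      (if 0 < y₁ - y₂ then (1 : ℝ) else -1) * (φ y₁ - φ y₂) ≤ k₁ * |y₁ - y₂|)
    (hpos : ∀ y₁ y₂, 0 ≤ y₁ → 0 ≤ y₂ → |φ y₁ - φ y₂| ≤ k₂ * |y₁ - y₂|)
    (hy : y₂ ≤ y₁) : φ y₁ - φ y₂ ≤ (k₁ + k₂) * (y₁ - y₂) := by
  have hk : 0 ≤ k₁ + k₂ := add_nonneg hk₁ hk₂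
  rcases le_total y₁ 0 with hy₁ | hy₁
  · nlinarith [sub_le_of_le_of_nonpos hneg hy hy₁]
  rcases le_total 0 y₂ with hy₂ | hy₂
  · have := le_of_abs_le (hpos y₁ y₂ hy₁ hy₂)
    rw [abs_of_nonneg (sub_nonneg.2 hy)] at this
    nlinarith
  have h₁ := le_of_abs_le (hpos y₁ 0 hy₁ le_rfl)
  have h₂ := sub_le_of_le_of_nonpos hneg hy₂ le_rfl
  rw [sub_zero, abs_of_nonneg hy₁] at h₁
  nlinarith

lemma mul_sub_le_of_mul_lt {θ : ℝ} (hk₁ : 0 ≤ k₁) (hk₂ : 0 ≤ k₂)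
    (hneg : ∀ y₁ y₂, y₁ ≤ 0 → y₂ ≤ 0 →
      (if 0 < y₁ - y₂ then (1 : ℝ) else -1) * (φ y₁ - φ y₂) ≤ k₁ * |y₁ - y₂|)
    (hpos : ∀ y₁ y₂, 0 ≤ y₁ → 0 ≤ y₂ → |φ y₁ - φ y₂| ≤ k₂ * |y₁ - y₂|)
    (hθ0 : 0 < θ) (hθ1 : θ < 1) (hy : θ * y₂ < y₁) :
    θ * (φ y₁ - φ y₂) ≤ (1 - θ) * ((k₁ + k₂) * (|y₂| + |(y₁ - θ * y₂) / (1 - θ)|)) := by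
  have hθ : 0 < 1 - θ := sub_pos.2 hθ1
  have hdist : |y₁ - y₂| ≤ (1 - θ) * (|y₂| + |(y₁ - θ * y₂) / (1 - θ)|) := by
    rw [show y₁ - y₂ = (1 - θ) * ((y₁ - θ * y₂) / (1 - θ) - y₂) by field_simp; ring,
      abs_mul, abs_of_pos hθ]
    gcongr
    exact (abs_sub _ _).trans_eq (add_comm _ _)
  have hlip : φ y₁ - φ y₂ ≤ (k₁ + k₂) * |y₁ - y₂| := by
    rcases le_total y₂ y₁ with hle | hle
    · simpa [abs_of_nonneg (sub_nonneg.2 hle)] using sub_le_add_mul_of_le hk₁ hk₂ hneg hpos hle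
    have hy₂ : 0 ≤ y₂ := by nlinarith
    have hy₁ : 0 ≤ y₁ := by nlinarith
    nlinarith [le_of_abs_le (hpos y₁ y₂ hy₁ hy₂), abs_nonneg (y₁ - y₂)]
  have hk : 0 ≤ (k₁ + k₂) * |y₁ - y₂| := by positivity
  calc θ * (φ y₁ - φ y₂) ≤ θ * ((k₁ + k₂) * |y₁ - y₂|) := by gcongr
    _ ≤ (k₁ + k₂) * |y₁ - y₂| := mul_le_of_le_one_left hk hθ1.le
    _ ≤ (k₁ + k₂) * ((1 - θ) * (|y₂| + |(y₁ - θ * y₂) / (1 - θ)|)) := by gcongr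
    _ = (1 - θ) * ((k₁ + k₂) * (|y₂| + |(y₁ - θ * y₂) / (1 - θ)|)) := by ring

end OneSidedLipschitz

lemma le_one_add_rpow {t α : ℝ} (ht : 0 ≤ t) (hα : 1 ≤ α) : t ≤ 1 + t ^ α := by
  rcases le_total t 1 with h | h
  · linarith [Real.rpow_nonneg ht α]
  · linarith [Real.self_le_rpow_of_one_le h hα]

section ConvexOutsideBand

variable {h : ℝ → ℝ} {a c : ℝ}

lemma sub_le_mul_abs_sub_of_mem_Icc (ha : 0 ≤ a)
    (hlip : ∀ p q, p ∈ Icc (-a) a → q ∈ Icc (-a) a → |h p - h q| ≤ c * |p - q|)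
    (hright : ∀ z, a ≤ z → h a - h z ≤ c * (z - a))
    (hleft : ∀ z, z ≤ -a → h (-a) - h z ≤ c * (-a - z)) :
    ∀ p ∈ Icc (-a) a, ∀ z, h p - h z ≤ c * |p - z| := by
  rintro p ⟨hpl, hpr⟩ z
  rcases le_or_gt z (-a) with hz | hz
  · have hpa := (abs_le.1 (hlip p (-a) ⟨hpl, hpr⟩ ⟨le_rfl, by linarith⟩)).2
    rw [abs_of_nonneg (by linarith : 0 ≤ p - -a)] at hpa
    rw [abs_of_nonneg (by linarith : 0 ≤ p - z)]
    linarith [hleft z hz]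
  rcases le_or_gt a z with hz' | hz'
  · have hpa := (abs_le.1 (hlip p a ⟨hpl, hpr⟩ ⟨by linarith, le_rfl⟩)).2
    rw [abs_of_nonpos (by linarith : p - a ≤ 0)] at hpa
    rw [abs_of_nonpos (by linarith : p - z ≤ 0)]
    linarith [hright z hz']
  · exact (abs_le.1 (hlip p z ⟨hpl, hpr⟩ ⟨hz.le, hz'.le⟩)).2

variable {M N θ z₂ w : ℝ}

/- Either `z₂ < a`, and `z₁` is interpolated between `a` and `w`; or `z₂, w ≥ a`; or `w < a`,
and `z₁` is interpolated between `a` and `z₂`. -/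
lemma apply_combo_sub_mul_le_of_convexOn_Ici (hconv : ConvexOn ℝ (Ici a) h)
    (hslope : ∀ z, h a - h z ≤ c * |a - z|) (hM : h a ≤ M) (hN : h w ≤ N)
    (hM0 : 0 ≤ M) (hN0 : 0 ≤ N) (hc : 0 ≤ c) (hθ0 : 0 < θ) (hθ1 : θ < 1)
    (hz₁ : a ≤ θ * z₂ + (1 - θ) * w) :
    h (θ * z₂ + (1 - θ) * w) - θ * h z₂ ≤ (1 - θ) * (M + N + c * |w - a|) := by
  set z₁ := θ * z₂ + (1 - θ) * w with hz₁_def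
  rcases lt_or_ge z₂ a with hz₂ | hz₂
  · have hw : z₁ ≤ w := by nlinarith
    obtain ⟨μ, ν, hμ, hν, hμν, hcombo⟩ : z₁ ∈ segment ℝ a w := by
      rw [segment_eq_Icc (hz₁.trans hw)]; exact ⟨hz₁, hw⟩
    simp only [smul_eq_mul] at hcombo
    have hshift : θ * (a - z₂) = (μ - θ) * (w - a) := by
      linear_combination hz₁_def + hcombo - w * hμν
    have hθμ : θ ≤ μ := by nlinarith
    have hconvex : h z₁ ≤ μ * h a + ν * h w := by
      simpa only [smul_eq_mul, hcombo] using
        hconv.2 self_mem_Ici (hz₁.trans hw) hμ hν hμν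
    have hslope' : h a - h z₂ ≤ c * (a - z₂) := by
      simpa only [abs_of_pos (sub_pos.2 hz₂)] using hslope z₂
    rw [abs_of_nonneg (by linarith : 0 ≤ w - a)]
    calc h z₁ - θ * h z₂
        ≤ (μ - θ) * h a + ν * h w + θ * (h a - h z₂) := by linarith
      _ ≤ (μ - θ) * M + ν * N + θ * (c * (a - z₂)) := by gcongr
      _ = (μ - θ) * (M + c * (w - a)) + ν * N := by
        rw [← mul_assoc, mul_comm θ c, mul_assoc, hshift]; ring
      _ ≤ (1 - θ) * (M + c * (w - a)) + (1 - θ) * N := by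
        have : 0 ≤ c * (w - a) := mul_nonneg hc (by linarith)
        gcongr <;> linarith
      _ = (1 - θ) * (M + N + c * (w - a)) := by ring
  rcases le_or_gt a w with hw | hw
  · have hconvex : h z₁ ≤ θ * h z₂ + (1 - θ) * h w :=
      hconv.2 hz₂ hw hθ0.le (sub_nonneg.2 hθ1.le) (by ring)
    have : 0 ≤ c * |w - a| := by positivity
    nlinarith
  · have hz₂' : z₁ ≤ z₂ := by nlinarith
    obtain ⟨μ, ν, hμ, hν, hμν, hcombo⟩ : z₁ ∈ segment ℝ a z₂ := by
      rw [segment_eq_Icc (hz₁.trans hz₂')]; exact ⟨hz₁, hz₂'⟩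
    simp only [smul_eq_mul] at hcombo
    have hshift : (θ - ν) * (z₂ - a) = (1 - θ) * (a - w) := by
      linear_combination -hz₁_def - hcombo + a * hμν
    have hνθ : ν ≤ θ := by nlinarith
    have hconvex : h z₁ ≤ μ * h a + ν * h z₂ := by
      simpa only [smul_eq_mul, hcombo] using hconv.2 self_mem_Ici hz₂ hμ hν hμν
    have hslope' : h a - c * (z₂ - a) ≤ h z₂ := by
      linarith [abs_of_nonpos (sub_nonpos.2 (hz₁.trans hz₂')) ▸ hslope z₂]
    rw [abs_sub_comm, abs_of_pos (sub_pos.2 hw)]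
    calc h z₁ - θ * h z₂
        ≤ μ * h a - (θ - ν) * h z₂ := by linarith
      _ ≤ μ * h a - (θ - ν) * (h a - c * (z₂ - a)) := by gcongr
      _ = (1 - θ) * (h a + c * (a - w)) := by
        rw [mul_sub, ← mul_assoc, mul_comm _ c, mul_assoc, hshift]
        linear_combination (h a) * hμν
      _ ≤ (1 - θ) * (M + N + c * (a - w)) := by gcongr; linarith

lemma apply_combo_sub_mul_le (ha : 0 ≤ a) (hc : 0 ≤ c)
    (hlip : ∀ p q, p ∈ Icc (-a) a → q ∈ Icc (-a) a → |h p - h q| ≤ c * |p - q|)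
    (hconv : ConvexOn ℝ (Iic (-a)) h ∧ ConvexOn ℝ (Ici a) h)
    (hright : ∀ z, a ≤ z → h a - h z ≤ c * (z - a))
    (hleft : ∀ z, z ≤ -a → h (-a) - h z ≤ c * (-a - z))
    (hM : ∀ p ∈ Icc (-a) a, h p ≤ M) (hN : h w ≤ N) (hM0 : 0 ≤ M) (hN0 : 0 ≤ N)
    (hθ0 : 0 < θ) (hθ1 : θ < 1) :
    h (θ * z₂ + (1 - θ) * w) - θ * h z₂ ≤ (1 - θ) * (M + N + c * (|w| + a)) := by
  have hslope := sub_le_mul_abs_sub_of_mem_Icc ha hlip hright hleft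
  have ha_mem : a ∈ Icc (-a) a := ⟨by linarith, le_rfl⟩
  have hna_mem : -a ∈ Icc (-a) a := ⟨le_rfl, by linarith⟩
  set z₁ := θ * z₂ + (1 - θ) * w with hz₁_def
  rcases le_or_gt a z₁ with hr | hr
  · refine (apply_combo_sub_mul_le_of_convexOn_Ici hconv.2 (hslope a ha_mem) (hM a ha_mem) hN
      hM0 hN0 hc hθ0 hθ1 hr).trans ?_
    have : |w - a| ≤ |w| + a := by simpa [abs_of_nonneg ha] using abs_sub w a
    gcongr
  rcases le_or_gt z₁ (-a) with hl | hl
  -- reflect `z ↦ -z` to reduce to the previous case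
  · have hconv' : ConvexOn ℝ (Ici a) (fun z => h (-z)) := by
      convert hconv.1.comp_linearMap (-LinearMap.id) using 1 <;> ext <;> simp
    have hslope' (z : ℝ) : h (-a) - h (-z) ≤ c * |a - z| := by
      simpa only [show -a - -z = -(a - z) by ring, abs_neg] using hslope (-a) hna_mem (-z)
    have hrefl := apply_combo_sub_mul_le_of_convexOn_Ici (h := fun z => h (-z)) (z₂ := -z₂)
      (w := -w) hconv' hslope' (hM (-a) hna_mem) (by rwa [neg_neg]) hM0 hN0 hc hθ0 hθ1
      (by linarith)
    rw [show -(θ * -z₂ + (1 - θ) * -w) = z₁ by ring, neg_neg] at hrefl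
    refine hrefl.trans ?_
    have : |-w - a| ≤ |w| + a := by simpa [abs_of_nonneg ha] using abs_sub (-w) a
    gcongr
  · have hz₁_mem : z₁ ∈ Icc (-a) a := ⟨hl.le, hr.le⟩
    have hdist : θ * |z₁ - z₂| = (1 - θ) * |w - z₁| := by
      have := congrArg abs (show θ * (z₁ - z₂) = (1 - θ) * (w - z₁) by rw [hz₁_def]; ring)
      rwa [abs_mul, abs_mul, abs_of_pos hθ0, abs_of_pos (sub_pos.2 hθ1)] at this
    have : |w - z₁| ≤ |w| + a := (abs_sub w z₁).trans (by gcongr; exact abs_le.2 hz₁_mem)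
    calc h z₁ - θ * h z₂ = θ * (h z₁ - h z₂) + (1 - θ) * h z₁ := by ring
      _ ≤ θ * (c * |z₁ - z₂|) + (1 - θ) * M := by
        gcongr
        exacts [hslope z₁ hz₁_mem z₂, hM z₁ hz₁_mem]
      _ = (1 - θ) * (M + c * |w - z₁|) := by rw [mul_left_comm, hdist]; ring
      _ ≤ (1 - θ) * (M + N + c * (|w| + a)) := by gcongr; linarith

end ConvexOutsideBand

lemma apply_combo_sub_mul_le_of_growth {h : ℝ → ℝ} {α F v a c₁ c₂ c₃ θ z₂ w : ℝ}
    (hα : 0 ≤ α) (hF : 0 ≤ F) (hv : 0 ≤ v) (ha : 0 ≤ a) (hc₁ : 0 ≤ c₁)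
    (hθ0 : 0 < θ) (hθ1 : θ < 1)
    (hgrowth : ∀ z, |h z| ≤ F + v * |z| ^ α)
    (hlip : ∀ z₁ z₂, z₁ ∈ Icc (-a) a → z₂ ∈ Icc (-a) a → |h z₁ - h z₂| ≤ c₁ * |z₁ - z₂|)
    (hconv : ConvexOn ℝ (Iic (-a)) h ∧ ConvexOn ℝ (Ici a) h)
    (hslope : ∀ z, (a ≤ z → h z - h a ≥ -c₂ * (z - a)) ∧
      (z ≤ -a → h z - h (-a) ≥ c₃ * (z + a))) :
    h (θ * z₂ + (1 - θ) * w) - θ * h z₂ ≤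
      (1 - θ) * (2 * F + v * a ^ α + v * |w| ^ α + max (max c₁ c₂) c₃ * (|w| + a)) := by
  set c := max (max c₁ c₂) c₃
  have hc₁c : c₁ ≤ c := (le_max_left _ _).trans (le_max_left _ _)
  have hc₂c : c₂ ≤ c := (le_max_right _ _).trans (le_max_left _ _)
  have hc₃c : c₃ ≤ c := le_max_right _ _
  have hband : ∀ p ∈ Icc (-a) a, h p ≤ F + v * a ^ α := fun p hp => by
    have : |p| ^ α ≤ a ^ α := Real.rpow_le_rpow (abs_nonneg p) (abs_le.2 hp) hα
    linarith [le_of_abs_le (hgrowth p), mul_le_mul_of_nonneg_left this hv]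
  have := apply_combo_sub_mul_le (h := h) (z₂ := z₂) ha (hc₁.trans hc₁c)
    (fun p q hp hq => (hlip p q hp hq).trans (by gcongr))
    hconv
    (fun z hz => by nlinarith [(hslope z).1 hz])
    (fun z hz => by nlinarith [(hslope z).2 hz])
    hband (le_of_abs_le (hgrowth w)) (by positivity) (by positivity) hθ0 hθ1
  linarith

theorem stmt_15_general
    (α : ℝ) (hα : α ∈ Set.Ioo (1 : ℝ) 2)
    (f u v k₁ k₂ c₁ c₂ c₃ a : ℝ)
    (hf : 0 ≤ f) (hu : 0 ≤ u) (hv : 0 ≤ v)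
    (hk₁ : 0 < k₁) (hk₂ : 0 < k₂)
    (hc₁ : 0 ≤ c₁) (ha : 0 ≤ a)
    (g : ℝ → ℝ → ℝ)
    (hA1 : ∀ y z : ℝ, |g y z| ≤ f + u * |y| + v * |z| ^ α)
    (hA2i : ∀ y₁ y₂ z : ℝ, y₁ ≤ 0 → y₂ ≤ 0 →
      (if 0 < y₁ - y₂ then (1 : ℝ) else -1) * (g y₁ z - g y₂ z) ≤ k₁ * |y₁ - y₂|)
    (hA2ii : ∀ y₁ y₂ z : ℝ, 0 ≤ y₁ → 0 ≤ y₂ →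
      |g y₁ z - g y₂ z| ≤ k₂ * |y₁ - y₂|)
    (hA3i : ∀ y z₁ z₂ : ℝ, z₁ ∈ Set.Icc (-a) a → z₂ ∈ Set.Icc (-a) a →
      |g y z₁ - g y z₂| ≤ c₁ * |z₁ - z₂|)
    (hA3ii : ∀ y : ℝ, ConvexOn ℝ (Set.Iic (-a)) (g y) ∧
      ConvexOn ℝ (Set.Ici a) (g y))
    (hA4 : ∀ y z : ℝ, (a ≤ z → g y z - g y a ≥ -c₂ * (z - a)) ∧
      (z ≤ -a → g y z - g y (-a) ≥ c₃ * (z + a)))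
    (c : ℝ) (hc : c = max (max c₁ c₂) c₃) :
    ∀ (y₁ z₁ y₂ z₂ θ : ℝ), 0 < θ → θ < 1 → θ * y₂ < y₁ →
      g y₁ z₁ - θ * g y₂ z₂ ≤
        (1 - θ) * ((23 * f + 38 * v * a ^ α + 2 * c + 11 * c * a)
          + (23 * u + k₁ + k₂) * |y₂|
          + (23 * u + k₁ + k₂) * |(y₁ - θ * y₂) / (1 - θ)|
          + (4 * v + 2 * c) * |(z₁ - θ * z₂) / (1 - θ)| ^ α) := by
  intro y₁ z₁ y₂ z₂ θ hθ0 hθ1 hy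
  set w := (z₁ - θ * z₂) / (1 - θ)
  set δ := (y₁ - θ * y₂) / (1 - θ)
  have hθ : 0 < 1 - θ := sub_pos.2 hθ1
  have hz₁ : z₁ = θ * z₂ + (1 - θ) * w := by simp only [w]; field_simp; ring
  have hy₁ : y₁ = θ * y₂ + (1 - θ) * δ := by simp only [δ]; field_simp; ring
  have hc0 : 0 ≤ c := hc ▸ hc₁.trans ((le_max_left _ _).trans (le_max_left _ _))
  have hZ := apply_combo_sub_mul_le_of_growth (w := w) (z₂ := z₂) (hα.1.le.trans' zero_le_one)
    (by positivity : 0 ≤ f + u * |y₁|) hv ha hc₁ hθ0 hθ1 (hA1 y₁) (hA3i y₁) (hA3ii y₁) (hA4 y₁)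
  rw [← hz₁, ← hc] at hZ
  have hY := mul_sub_le_of_mul_lt hk₁.le hk₂.le (fun y₁ y₂ => hA2i y₁ y₂ z₂)
    (fun y₁ y₂ => hA2ii y₁ y₂ z₂) hθ0 hθ1 hy
  have hy₁_abs : |y₁| ≤ |y₂| + |δ| := by
    rw [hy₁]
    refine (abs_add_le _ _).trans ?_
    rw [abs_mul, abs_mul, abs_of_pos hθ0, abs_of_pos hθ]
    nlinarith [abs_nonneg y₂, abs_nonneg δ]
  have hw := le_one_add_rpow (abs_nonneg w) hα.1.le
  have hsum : 2 * (f + u * |y₁|) + v * a ^ α + v * |w| ^ α + c * (|w| + a)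
      + (k₁ + k₂) * (|y₂| + |δ|) ≤ 23 * f + 38 * v * a ^ α + 2 * c + 11 * c * a
        + (23 * u + k₁ + k₂) * |y₂| + (23 * u + k₁ + k₂) * |δ| + (4 * v + 2 * c) * |w| ^ α := by
    have hwα : 0 ≤ |w| ^ α := by positivity
    linarith [mul_le_mul_of_nonneg_left hy₁_abs hu, mul_le_mul_of_nonneg_left hw hc0,
      mul_nonneg hc0 ha, mul_nonneg hc0 hwα, mul_nonneg hv hwα, mul_nonneg hu (abs_nonneg y₂),
      mul_nonneg hu (abs_nonneg δ), mul_nonneg hv (Real.rpow_nonneg ha α)]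
  calc g y₁ z₁ - θ * g y₂ z₂ = (g y₁ z₁ - θ * g y₁ z₂) + θ * (g y₁ z₂ - g y₂ z₂) := by ring
    _ ≤ _ := add_le_add hZ hY
    _ ≤ _ := by rw [← mul_add]; gcongr

/-- Proposition 5.2, stated pointwise for a deterministic generator on
`ℝ × ℝ` (`d = 1`): under assumptions (A1)-(A4), the generator `g` satisfies
the (5.1)-type θ-difference inequality with the displayed constants.
Here `sgn x = 1` if `x > 0` and `-1` otherwise. -/
theorem stmt_15
    (α : ℝ) (hα : α ∈ Set.Ioo (1 : ℝ) 2)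
    (f u v k₁ k₂ c₁ c₂ c₃ a : ℝ)
    (hf : 0 ≤ f) (hu : 0 ≤ u) (hv : 0 ≤ v)
    (hk₁ : 0 < k₁) (hk₂ : 0 < k₂)
    (hc₁ : 0 ≤ c₁) (hc₂ : 0 ≤ c₂) (hc₃ : 0 ≤ c₃) (ha : 0 ≤ a)
    (g : ℝ → ℝ → ℝ)
    (hg_cont : Continuous (fun p : ℝ × ℝ => g p.1 p.2))
    (hA1 : ∀ y z : ℝ, |g y z| ≤ f + u * |y| + v * |z| ^ α)
    (hA2i : ∀ y₁ y₂ z : ℝ, y₁ ≤ 0 → y₂ ≤ 0 →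
      (if 0 < y₁ - y₂ then (1 : ℝ) else -1) * (g y₁ z - g y₂ z) ≤ k₁ * |y₁ - y₂|)
    (hA2ii : ∀ y₁ y₂ z : ℝ, 0 ≤ y₁ → 0 ≤ y₂ →
      |g y₁ z - g y₂ z| ≤ k₂ * |y₁ - y₂|)
    (hA3i : ∀ y z₁ z₂ : ℝ, z₁ ∈ Set.Icc (-a) a → z₂ ∈ Set.Icc (-a) a →
      |g y z₁ - g y z₂| ≤ c₁ * |z₁ - z₂|)
    (hA3ii : ∀ y : ℝ, ConvexOn ℝ (Set.Iic (-a)) (g y) ∧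
      ConvexOn ℝ (Set.Ici a) (g y))
    (hA4 : ∀ y z : ℝ, (a ≤ z → g y z - g y a ≥ -c₂ * (z - a)) ∧
      (z ≤ -a → g y z - g y (-a) ≥ c₃ * (z + a)))
    (c : ℝ) (hc : c = max (max c₁ c₂) c₃) :
    ∀ (y₁ z₁ y₂ z₂ θ : ℝ), 0 < θ → θ < 1 → θ * y₂ < y₁ →
      g y₁ z₁ - θ * g y₂ z₂ ≤
        (1 - θ) * ((23 * f + 38 * v * a ^ α + 2 * c + 11 * c * a)
          + (23 * u + k₁ + k₂) * |y₂|
          + (23 * u + k₁ + k₂) * |(y₁ - θ * y₂) / (1 - θ)|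
          + (4 * v + 2 * c) * |(z₁ - θ * z₂) / (1 - θ)| ^ α) :=
  stmt_15_general α hα f u v k₁ k₂ c₁ c₂ c₃ a hf hu hv hk₁ hk₂ hc₁ ha g hA1 hA2i hA2ii hA3i hA3ii
    hA4 c hc
end

section
/- Let α ∈ (1,2) and α* := α/(α−1). Let f, ū, v̄, c̄, k₁, k₂ ≥ 0 and a ≥ 0 be real numbers, with k₁, k₂ > 0. Let g : ℝ × ℝ → ℝ be a continuous function satisfying for all (y,z) ∈ ℝ × ℝ: (A2)(i) sgn(y₁ − y₂)(g(y₁,z) − g(y₂,z)) ≤ k₁|y₁ − y₂| for all y₁, y₂ ≤ 0 and all z; (A2)(ii) |g(y₁,z) − g(y₂,z)| ≤ k₂|y₁ − y₂| for all y₁, y₂ ≥ 0 and all z; (A5) |g(y,z)| ≤ f + ū|y| + v̄[ln(e + |z|)]^{α*/2}; (A6)(i) |g(y,z₁) − g(y,z₂)| ≤ c̄|z₁ − z₂| for all z₁, z₂ ∈ ℝ and all y; (A6)(ii) for each y, z ↦ g(y,z) is nonincreasing on (−∞,−a] and nondecreasing on [a,∞). Then for all (y₁,z₁),(y₂,z₂)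 ∈ ℝ² and θ ∈ (0,1) with y₁ > θy₂: g(y₁,z₁) − θg(y₂,z₂) ≤ (1−θ)·[ (12f + 11v̄[ln(e+a)]^{α*/2} + 4c̄a + 4c̄) + (k₁ + k₂ + 12ū)|y₂| + v̄[ln(e + |z₂|)]^{α*/2} + (k₁ + k₂ + 12ū)|δ_θy| + 4c̄|δ_θz|^α ], where δ_θy := (y₁ − θy₂)/(1−θ) and δ_θz := (z₁ − θz₂)/(1−θ). -/
/-!
Split `g(y₁,z₁) - θ g(y₂,z₂)` as a `z`-increment at `y₁`, a `y`-increment at `z₂` and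
`(1-θ) g(y₂,z₂)`. The last is controlled by the growth bound (A5) and the `y`-increment by the
one-sided Lipschitz conditions (A2), passing through `0` when `y₂ < 0 < y₁`. For the
`z`-increment, the monotonicity of `g(y₁,·)` outside `[-a,a]` provides a point `p` within
`(1-θ)a` of `θz₂` with `g(y₁,p) ≤ g(y₁,z₂)`, so the Lipschitz bound (A6)(i) only pays for
`|z₁ - θz₂| + (1-θ)a`. Dividing by `1-θ` and using `t ≤ t^α + 1` gives the claim.
-/

open Set

section Increments

variable {h : ℝ → ℝ} {k₁ k₂ c a θ : ℝ}

theorem sub_le_mul_sub_of_sgn_mul_sub_le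
    (hsgn : ∀ y₁ y₂, y₁ ≤ 0 → y₂ ≤ 0 →
      (if 0 < y₁ - y₂ then (1 : ℝ) else -1) * (h y₁ - h y₂) ≤ k₁ * |y₁ - y₂|)
    {y₁ y₂ : ℝ} (hy₁ : y₁ ≤ 0) (hy : y₂ ≤ y₁) :
    h y₁ - h y₂ ≤ k₁ * (y₁ - y₂) := by
  rcases hy.eq_or_lt with rfl | hlt
  · simp
  · have := hsgn y₁ y₂ hy₁ (hy.trans hy₁)
    rwa [if_pos (sub_pos.mpr hlt), one_mul, abs_of_pos (sub_pos.mpr hlt)] at this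

theorem sub_le_add_mul_sub_of_le (hk₁ : 0 ≤ k₁) (hk₂ : 0 ≤ k₂)
    (hneg : ∀ y₁ y₂, y₁ ≤ 0 → y₂ ≤ y₁ → h y₁ - h y₂ ≤ k₁ * (y₁ - y₂))
    (hpos : ∀ y₁ y₂, 0 ≤ y₁ → 0 ≤ y₂ → |h y₁ - h y₂| ≤ k₂ * |y₁ - y₂|)
    {y₁ y₂ : ℝ} (hy : y₂ ≤ y₁) :
    h y₁ - h y₂ ≤ (k₁ + k₂) * (y₁ - y₂) := by
  have hpos' : ∀ y₁ y₂, 0 ≤ y₂ → y₂ ≤ y₁ → h y₁ - h y₂ ≤ k₂ * (y₁ - y₂) := fun y₁ y₂ h₂ h₁₂ =>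
    (le_abs_self _).trans <| by
      simpa [abs_of_nonneg (sub_nonneg.mpr h₁₂)] using hpos y₁ y₂ (h₂.trans h₁₂) h₂
  have hd : 0 ≤ y₁ - y₂ := sub_nonneg.mpr hy
  rcases le_total y₁ 0 with hy₁ | hy₁
  · nlinarith [hneg y₁ y₂ hy₁ hy]
  rcases le_total 0 y₂ with hy₂ | hy₂
  · nlinarith [hpos' y₁ y₂ hy₂ hy]
  have h₁ := hpos' y₁ 0 le_rfl hy₁
  have h₂ := hneg 0 y₂ le_rfl hy₂
  nlinarith

theorem sub_le_add_mul_abs_sub_of_mul_lt (hk₁ : 0 ≤ k₁) (hk₂ : 0 ≤ k₂)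
    (hneg : ∀ y₁ y₂, y₁ ≤ 0 → y₂ ≤ y₁ → h y₁ - h y₂ ≤ k₁ * (y₁ - y₂))
    (hpos : ∀ y₁ y₂, 0 ≤ y₁ → 0 ≤ y₂ → |h y₁ - h y₂| ≤ k₂ * |y₁ - y₂|)
    {y₁ y₂ : ℝ} (hθ₀ : 0 ≤ θ) (hθ₁ : θ ≤ 1) (hy : θ * y₂ < y₁) :
    h y₁ - h y₂ ≤ (k₁ + k₂) * |y₁ - y₂| := by
  rcases le_or_gt 0 y₂ with hy₂ | hy₂
  · have hy₁ : 0 ≤ y₁ := (mul_nonneg hθ₀ hy₂).trans hy.le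
    calc h y₁ - h y₂ ≤ k₂ * |y₁ - y₂| := (le_abs_self _).trans (hpos y₁ y₂ hy₁ hy₂)
      _ ≤ (k₁ + k₂) * |y₁ - y₂| := by gcongr; linarith
  · have hlt : y₂ < y₁ := by nlinarith
    rw [abs_of_pos (sub_pos.mpr hlt)]
    exact sub_le_add_mul_sub_of_le hk₁ hk₂ hneg hpos hlt.le

/-- The point `p` is `θz ∓ (1-θ)a` outside `[-a, a]`, and `z` itself inside. -/
theorem exists_abs_sub_mul_le_and_le (ha : 0 ≤ a)
    (hanti : AntitoneOn h (Iic (-a))) (hmono : MonotoneOn h (Ici a))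
    (hθ₀ : 0 ≤ θ) (hθ₁ : θ ≤ 1) (z : ℝ) :
    ∃ p, |p - θ * z| ≤ (1 - θ) * a ∧ h p ≤ h z := by
  have hs : 0 ≤ 1 - θ := sub_nonneg.mpr hθ₁
  rcases le_or_gt z (-a) with hz | hz
  · refine ⟨θ * z - (1 - θ) * a, by simp [abs_of_nonneg (mul_nonneg hs ha)], ?_⟩
    exact hanti (mem_Iic.mpr hz) (mem_Iic.mpr (by nlinarith)) (by nlinarith)
  rcases le_or_gt a z with hz' | hz'
  · refine ⟨θ * z + (1 - θ) * a, by simp [abs_of_nonneg (mul_nonneg hs ha)], ?_⟩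
    exact hmono (mem_Ici.mpr (by nlinarith)) (mem_Ici.mpr hz') (by nlinarith)
  · refine ⟨z, ?_, le_rfl⟩
    rw [show z - θ * z = (1 - θ) * z by ring, abs_mul, abs_of_nonneg hs]
    exact mul_le_mul_of_nonneg_left (abs_le.mpr ⟨hz.le, hz'.le⟩) hs

theorem sub_le_mul_abs_sub_mul_add (hc : 0 ≤ c) (ha : 0 ≤ a)
    (hlip : ∀ z₁ z₂, |h z₁ - h z₂| ≤ c * |z₁ - z₂|)
    (hanti : AntitoneOn h (Iic (-a))) (hmono : MonotoneOn h (Ici a))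
    (hθ₀ : 0 ≤ θ) (hθ₁ : θ ≤ 1) (z₁ z₂ : ℝ) :
    h z₁ - h z₂ ≤ c * (|z₁ - θ * z₂| + (1 - θ) * a) := by
  obtain ⟨p, hp, hle⟩ := exists_abs_sub_mul_le_and_le ha hanti hmono hθ₀ hθ₁ z₂
  calc h z₁ - h z₂ ≤ h z₁ - h p := by linarith
    _ ≤ c * |z₁ - p| := (le_abs_self _).trans (hlip z₁ p)
    _ ≤ c * (|z₁ - θ * z₂| + |θ * z₂ - p|) := by gcongr; exact abs_sub_le _ _ _
    _ ≤ c * (|z₁ - θ * z₂| + (1 - θ) * a) := by gcongr; rwa [abs_sub_comm]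

end Increments

theorem self_le_rpow_add_one {t α : ℝ} (ht : 0 ≤ t) (hα : 1 ≤ α) : t ≤ t ^ α + 1 := by
  rcases le_total t 1 with h | h
  · linarith [Real.rpow_nonneg ht α]
  · linarith [Real.self_le_rpow_of_one_le h hα]

theorem abs_eq_mul_abs_div {s : ℝ} (hs : 0 < s) (x : ℝ) : |x| = s * |x / s| := by
  rw [abs_div, abs_of_pos hs, mul_div_cancel₀ _ hs.ne']

theorem abs_sub_le_abs_sub_mul_add {θ : ℝ} (hθ : θ ≤ 1) (x y : ℝ) :
    |x - y| ≤ |x - θ * y| + (1 - θ) * |y| := by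
  calc |x - y| ≤ |x - θ * y| + |θ * y - y| := abs_sub_le _ _ _
    _ = |x - θ * y| + (1 - θ) * |y| := by
      rw [show θ * y - y = -((1 - θ) * y) by ring, abs_neg, abs_mul,
        abs_of_nonneg (sub_nonneg.mpr hθ)]

theorem stmt_16_general
    (α αs : ℝ) (hα : α ∈ Set.Ioo (1 : ℝ) 2)
    (f ub vb cb k₁ k₂ a : ℝ)
    (hf : 0 ≤ f) (hub : 0 ≤ ub) (hvb : 0 ≤ vb) (hcb : 0 ≤ cb)
    (hk₁ : 0 < k₁) (hk₂ : 0 < k₂) (ha : 0 ≤ a)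
    (g : ℝ → ℝ → ℝ)
    (hA2i : ∀ y₁ y₂ z : ℝ, y₁ ≤ 0 → y₂ ≤ 0 →
      (if 0 < y₁ - y₂ then (1 : ℝ) else -1) * (g y₁ z - g y₂ z) ≤ k₁ * |y₁ - y₂|)
    (hA2ii : ∀ y₁ y₂ z : ℝ, 0 ≤ y₁ → 0 ≤ y₂ →
      |g y₁ z - g y₂ z| ≤ k₂ * |y₁ - y₂|)
    (hA5 : ∀ y z : ℝ, |g y z| ≤
      f + ub * |y| + vb * (Real.log (Real.exp 1 + |z|)) ^ (αs / 2))
    (hA6i : ∀ y z₁ z₂ : ℝ, |g y z₁ - g y z₂| ≤ cb * |z₁ - z₂|)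
    (hA6ii : ∀ y : ℝ, AntitoneOn (g y) (Set.Iic (-a)) ∧
      MonotoneOn (g y) (Set.Ici a)) :
    ∀ (y₁ z₁ y₂ z₂ θ : ℝ), 0 < θ → θ < 1 → θ * y₂ < y₁ →
      g y₁ z₁ - θ * g y₂ z₂ ≤
        (1 - θ) * ((12 * f + 11 * vb * (Real.log (Real.exp 1 + a)) ^ (αs / 2)
            + 4 * cb * a + 4 * cb)
          + (k₁ + k₂ + 12 * ub) * |y₂|
          + vb * (Real.log (Real.exp 1 + |z₂|)) ^ (αs / 2)
          + (k₁ + k₂ + 12 * ub) * |(y₁ - θ * y₂) / (1 - θ)|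
          + 4 * cb * |(z₁ - θ * z₂) / (1 - θ)| ^ α) := by
  intro y₁ z₁ y₂ z₂ θ hθ₀ hθ₁ hy
  have hs : 0 < 1 - θ := sub_pos.mpr hθ₁
  set La := Real.log (Real.exp 1 + a) ^ (αs / 2)
  set L₂ := Real.log (Real.exp 1 + |z₂|) ^ (αs / 2)
  set Dy := |(y₁ - θ * y₂) / (1 - θ)|
  set Dz := |(z₁ - θ * z₂) / (1 - θ)|
  have hZ : g y₁ z₁ - g y₁ z₂ ≤ cb * ((1 - θ) * Dz + (1 - θ) * a) := by
    rw [← abs_eq_mul_abs_div hs]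
    exact sub_le_mul_abs_sub_mul_add hcb ha (hA6i y₁) (hA6ii y₁).1 (hA6ii y₁).2
      hθ₀.le hθ₁.le z₁ z₂
  have hY : g y₁ z₂ - g y₂ z₂ ≤ (k₁ + k₂) * ((1 - θ) * Dy + (1 - θ) * |y₂|) := by
    calc g y₁ z₂ - g y₂ z₂ ≤ (k₁ + k₂) * |y₁ - y₂| :=
          sub_le_add_mul_abs_sub_of_mul_lt (h := (g · z₂)) hk₁.le hk₂.le
            (fun _ _ h₁ h₁₂ => sub_le_mul_sub_of_sgn_mul_sub_le (hA2i · · z₂) h₁ h₁₂)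
            (hA2ii · · z₂) hθ₀.le hθ₁.le hy
      _ ≤ (k₁ + k₂) * ((1 - θ) * Dy + (1 - θ) * |y₂|) := by
        rw [← abs_eq_mul_abs_div hs]
        exact mul_le_mul_of_nonneg_left (abs_sub_le_abs_sub_mul_add hθ₁.le y₁ y₂) (by linarith)
  have hG : g y₂ z₂ ≤ f + ub * |y₂| + vb * L₂ := (le_abs_self _).trans (hA5 y₂ z₂)
  have hDz : Dz ≤ Dz ^ α + 1 := self_le_rpow_add_one (abs_nonneg _) hα.1.le
  have hLa : 0 ≤ La := Real.rpow_nonneg (Real.log_nonneg (by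
    linarith [Real.add_one_le_exp (1 : ℝ)])) _
  calc g y₁ z₁ - θ * g y₂ z₂
      = (g y₁ z₁ - g y₁ z₂) + (g y₁ z₂ - g y₂ z₂) + (1 - θ) * g y₂ z₂ := by ring
    _ ≤ cb * ((1 - θ) * Dz + (1 - θ) * a) + (k₁ + k₂) * ((1 - θ) * Dy + (1 - θ) * |y₂|)
        + (1 - θ) * (f + ub * |y₂| + vb * L₂) := by gcongr
    _ = (1 - θ) * (cb * Dz + cb * a + (k₁ + k₂) * (Dy + |y₂|) + f + ub * |y₂| + vb * L₂) := by
      ring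
    _ ≤ _ := by
      refine mul_le_mul_of_nonneg_left ?_ hs.le
      have hDy : 0 ≤ Dy := abs_nonneg _
      have hDzα : 0 ≤ Dz ^ α := Real.rpow_nonneg (abs_nonneg _) α
      linarith [mul_le_mul_of_nonneg_left hDz hcb, mul_nonneg hvb hLa, mul_nonneg hcb ha,
        mul_nonneg hub (abs_nonneg y₂), mul_nonneg hub hDy, mul_nonneg hcb hDzα]

/-- Proposition 5.3, stated pointwise for a deterministic generator on
`ℝ × ℝ` (`d = 1`): under assumptions (A2), (A5) and (A6), the generator `g`
satisfies the extended convexity inequality (4.1) with the displayed constants.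
Here `sgn x = 1` if `x > 0` and `-1` otherwise. -/
theorem stmt_16
    (α αs : ℝ) (hα : α ∈ Set.Ioo (1 : ℝ) 2) (hαs : αs = α / (α - 1))
    (f ub vb cb k₁ k₂ a : ℝ)
    (hf : 0 ≤ f) (hub : 0 ≤ ub) (hvb : 0 ≤ vb) (hcb : 0 ≤ cb)
    (hk₁ : 0 < k₁) (hk₂ : 0 < k₂) (ha : 0 ≤ a)
    (g : ℝ → ℝ → ℝ)
    (hg_cont : Continuous (fun p : ℝ × ℝ => g p.1 p.2))
    (hA2i : ∀ y₁ y₂ z : ℝ, y₁ ≤ 0 → y₂ ≤ 0 →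
      (if 0 < y₁ - y₂ then (1 : ℝ) else -1) * (g y₁ z - g y₂ z) ≤ k₁ * |y₁ - y₂|)
    (hA2ii : ∀ y₁ y₂ z : ℝ, 0 ≤ y₁ → 0 ≤ y₂ →
      |g y₁ z - g y₂ z| ≤ k₂ * |y₁ - y₂|)
    (hA5 : ∀ y z : ℝ, |g y z| ≤
      f + ub * |y| + vb * (Real.log (Real.exp 1 + |z|)) ^ (αs / 2))
    (hA6i : ∀ y z₁ z₂ : ℝ, |g y z₁ - g y z₂| ≤ cb * |z₁ - z₂|)
    (hA6ii : ∀ y : ℝ, AntitoneOn (g y) (Set.Iic (-a)) ∧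
      MonotoneOn (g y) (Set.Ici a)) :
    ∀ (y₁ z₁ y₂ z₂ θ : ℝ), 0 < θ → θ < 1 → θ * y₂ < y₁ →
      g y₁ z₁ - θ * g y₂ z₂ ≤
        (1 - θ) * ((12 * f + 11 * vb * (Real.log (Real.exp 1 + a)) ^ (αs / 2)
            + 4 * cb * a + 4 * cb)
          + (k₁ + k₂ + 12 * ub) * |y₂|
          + vb * (Real.log (Real.exp 1 + |z₂|)) ^ (αs / 2)
          + (k₁ + k₂ + 12 * ub) * |(y₁ - θ * y₂) / (1 - θ)|
          + 4 * cb * |(z₁ - θ * z₂) / (1 - θ)| ^ α) :=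
  stmt_16_general α αs hα f ub vb cb k₁ k₂ a hf hub hvb hcb hk₁ hk₂ ha g hA2i hA2ii hA5 hA6i hA6ii
end
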